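/- For every positive integer k, the thickened 4k-path has edge-crossing width at least k. -/

import Mathlib

/-!
Let a tree-cut decomposition of the thickened `n`-path have thickness and crossing number at
most `m`. If all of `u_0, …, u_{n-1}` lie in one bag, then `n ≤ m`. Otherwise two consecutive ones,
`u_i` and `u_{i+1}`, lie in the bags of distinct nodes `a ≠ b`. In a tree, either one node
separates `a` from `b`, or `a` and `b` are adjacent; in both cases there are two nodes such that
each common neighbour of `u_i` and `u_{i+1}` lies in one of their bags or is the endpoint of an
edge crossing one of them. Hence the `n` common neighbours number at most `4m`, and for
`n = 4k` this gives `k ≤ m`.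
-/

open SimpleGraph

universe u

/-- A tree-cut decomposition of a graph `G`: a finite tree `T` together with
pairwise disjoint (possibly empty) bags covering the vertex set of `G`. -/
structure TreeCutDecomp {V : Type u} (G : SimpleGraph V) where
  β : Type
  fintypeβ : Fintype β
  T : SimpleGraph β
  isTree : T.IsTree
  bag : β → Set V
  disj : Pairwise fun s t => Disjoint (bag s) (bag t)
  covers : ∀ v : V, ∃ t, v ∈ bag t

namespace TreeCutDecomp

variable {V : Type u} {G : SimpleGraph V}

/-- The edge `e` of `G` crosses the bag at node `t`: its endpoints lie in bag-unions of
two distinct components of `T - t`. -/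
def Crosses (D : TreeCutDecomp G) (t : D.β) (e : Sym2 V) : Prop :=
  e ∈ G.edgeSet ∧ ∃ (u v : V) (s₁ s₂ : D.β) (h₁ : s₁ ≠ t) (h₂ : s₂ ≠ t),
    e = s(u, v) ∧ u ∈ D.bag s₁ ∧ v ∈ D.bag s₂ ∧
    ¬ (D.T.induce {x | x ≠ t}).Reachable ⟨s₁, h₁⟩ ⟨s₂, h₂⟩

/-- The number of edges crossing the bag at node `t`. -/
noncomputable def crossNum (D : TreeCutDecomp G) (t : D.β) : ℕ :=
  {e : Sym2 V | D.Crosses t e}.ncard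

/-- The crossing number of the decomposition is at most `k`. -/
def CrossLE (D : TreeCutDecomp G) (k : ℕ) : Prop := ∀ t, D.crossNum t ≤ k

/-- The thickness (maximum bag size) of the decomposition is at most `a`. -/
def ThickLE (D : TreeCutDecomp G) (a : ℕ) : Prop := ∀ t, (D.bag t).ncard ≤ a

end TreeCutDecomp

/-- The `α`-edge-crossing width: minimum crossing number over tree-cut decompositions
of thickness at most `α`. -/
noncomputable def ecrwA {V : Type u} (G : SimpleGraph V) (a : ℕ) : ℕ :=
  sInf {k | ∃ D : TreeCutDecomp G, D.ThickLE a ∧ D.CrossLE k}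

/-- The edge-crossing width: minimum over tree-cut decompositions of the maximum of the
thickness and the crossing number. -/
noncomputable def ecrw {V : Type u} (G : SimpleGraph V) : ℕ :=
  sInf {k | ∃ D : TreeCutDecomp G, D.ThickLE k ∧ D.CrossLE k}

/-- The thickened `n`-path: a path `u_0, …, u_{n-1}` with each edge replaced by `n`
internally vertex-disjoint paths of length two. `Sum.inl i` is `u_i`; `Sum.inr (a, j)`
is the `j`-th middle vertex between `u_a` and `u_{a+1}`. -/
def thickenedPath (n : ℕ) : SimpleGraph (Fin n ⊕ (Fin (n - 1) × Fin n)) :=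
  SimpleGraph.fromRel fun x y =>
    match x, y with
    | Sum.inl i, Sum.inr (a, _) => (i : ℕ) = (a : ℕ) ∨ (i : ℕ) = (a : ℕ) + 1
    | _, _ => False

namespace SimpleGraph

variable {β : Type*} {T : SimpleGraph β} {t a b r : β}

def Separates (T : SimpleGraph β) (t a b : β) : Prop :=
  ∃ (ha : a ≠ t) (hb : b ≠ t), ¬ (T.induce {x | x ≠ t}).Reachable ⟨a, ha⟩ ⟨b, hb⟩

theorem Separates.symm (h : T.Separates t a b) : T.Separates t b a :=
  let ⟨ha, hb, hab⟩ := h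
  ⟨hb, ha, fun hba => hab hba.symm⟩

theorem Separates.left_or_right (h : T.Separates t a b) (hr : r ≠ t) :
    T.Separates t a r ∨ T.Separates t b r := by
  obtain ⟨ha, hb, hab⟩ := h
  by_contra hcon
  simp only [not_or, Separates, not_exists, not_not] at hcon
  exact hab ((hcon.1 ha hr).trans (hcon.2 hb hr).symm)

theorem IsAcyclic.separates_of_mem_support (hT : T.IsAcyclic) {p : T.Walk a b} (hp : p.IsPath)
    (ht : t ∈ p.support) (ha : a ≠ t) (hb : b ≠ t) : T.Separates t a b := by
  classical
  refine ⟨ha, hb, fun ⟨w⟩ => ?_⟩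
  let w' := w.map (Embedding.induce {x | x ≠ t}).toHom
  have hw't : ∀ x ∈ w'.support, x ≠ t := by
    rw [Walk.support_map, List.forall_mem_map]
    exact fun x _ => x.2
  have hpw : p = w'.toPath.val :=
    congrArg Subtype.val ((hT.subsingleton_path a b).elim ⟨p, hp⟩ w'.toPath)
  rw [hpw] at ht
  exact hw't t (w'.support_toPath_subset_support ht) rfl

theorem IsTree.adj_of_forall_not_separates (hT : T.IsTree) (hab : a ≠ b)
    (h : ∀ t, ¬ T.Separates t a b) : T.Adj a b := by
  obtain ⟨p, hp⟩ := hT.connected.exists_isPath a b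
  cases p with
  | nil => exact absurd rfl hab
  | @cons _ c _ hac q =>
    cases q with
    | nil => exact hac
    | cons hcd q' =>
      have hbc : b ≠ c := fun hbc =>
        (Walk.cons_isPath_iff _ _).mp hp.of_cons |>.2 (hbc ▸ q'.end_mem_support)
      exact absurd (hT.isAcyclic.separates_of_mem_support hp (by simp) hac.ne hbc) (h c)

theorem IsTree.separates_or_separates_of_adj (hT : T.IsTree) (hab : T.Adj a b) (hra : r ≠ a)
    (hrb : r ≠ b) : T.Separates a r b ∨ T.Separates b r a := by
  obtain ⟨p, hp⟩ := hT.connected.exists_isPath r a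
  obtain ⟨q, hq⟩ := hT.connected.exists_isPath r b
  by_cases ha : a ∈ q.support
  · exact Or.inl (hT.isAcyclic.separates_of_mem_support hq ha hra hab.ne')
  · exact Or.inr (hT.isAcyclic.separates_of_mem_support hp
      (hT.isAcyclic.mem_support_of_ne_mem_support_of_adj_of_isPath hp hq hab ha) hrb hab.ne)

/-- Either a single node separates `a` from `b`, and then it cuts every other node off from
`a` or from `b`; or `a` and `b` are adjacent, and then every other node is cut off from `b`
by `a` or from `a` by `b`. -/
theorem IsTree.exists_forall_eq_or_separates (hT : T.IsTree) (hab : a ≠ b) :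
    ∃ t₁ t₂, ∀ r, r = t₁ ∨ r = t₂ ∨ T.Separates t₁ b r ∨ T.Separates t₂ a r := by
  by_cases hsep : ∃ t, T.Separates t a b
  · obtain ⟨t, ht⟩ := hsep
    refine ⟨t, t, fun r => ?_⟩
    by_cases hr : r = t
    · exact Or.inl hr
    · rcases ht.left_or_right hr with h | h
      · exact Or.inr (Or.inr (Or.inr h))
      · exact Or.inr (Or.inr (Or.inl h))
  · push Not at hsep
    have hadj := hT.adj_of_forall_not_separates hab hsep
    refine ⟨a, b, fun r => ?_⟩
    by_cases hra : r = a
    · exact Or.inl hra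
    by_cases hrb : r = b
    · exact Or.inr (Or.inl hrb)
    rcases hT.separates_or_separates_of_adj hadj hra hrb with h | h
    · exact Or.inr (Or.inr (Or.inl h.symm))
    · exact Or.inr (Or.inr (Or.inr h.symm))

end SimpleGraph

namespace TreeCutDecomp

variable {V : Type u} {G : SimpleGraph V} (D : TreeCutDecomp G) {m : ℕ} {a b t : D.β} {x y : V}

noncomputable def node (v : V) : D.β := (D.covers v).choose

theorem mem_bag_node (v : V) : v ∈ D.bag (D.node v) := (D.covers v).choose_spec

theorem crosses_of_separates {u v : V} (huv : G.Adj u v) (hu : u ∈ D.bag a) (hv : v ∈ D.bag b)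
    (h : D.T.Separates t a b) : D.Crosses t s(u, v) :=
  let ⟨ha, hb, hab⟩ := h
  ⟨huv, u, v, a, b, ha, hb, rfl, hu, hv, hab⟩

theorem ncard_setOf_crosses_le [Finite V] (hcross : D.CrossLE m) (t : D.β) (x : V) :
    {w | D.Crosses t s(x, w)}.ncard ≤ m :=
  (Set.ncard_le_ncard_of_injOn (fun w => s(x, w)) (fun _ hw => hw)
    (fun _ _ _ _ h => Sym2.congr_right.mp h)).trans (hcross t)

theorem exists_commonNeighbors_subset (hx : x ∈ D.bag a) (hy : y ∈ D.bag b) (hab : a ≠ b) :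
    ∃ t₁ t₂, G.commonNeighbors x y ⊆
      D.bag t₁ ∪ D.bag t₂ ∪ {w | D.Crosses t₁ s(y, w)} ∪ {w | D.Crosses t₂ s(x, w)} := by
  obtain ⟨t₁, t₂, hcover⟩ := D.isTree.exists_forall_eq_or_separates hab
  refine ⟨t₁, t₂, fun w hw => ?_⟩
  rw [mem_commonNeighbors] at hw
  have hw' := D.mem_bag_node w
  simp only [Set.mem_union]
  rcases hcover (D.node w) with h | h | h | h
  · exact Or.inl (Or.inl (Or.inl (h ▸ hw')))
  · exact Or.inl (Or.inl (Or.inr (h ▸ hw')))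
  · exact Or.inl (Or.inr (D.crosses_of_separates hw.2 hy hw' h))
  · exact Or.inr (D.crosses_of_separates hw.1 hx hw' h)

theorem ncard_commonNeighbors_le [Finite V] (hthick : D.ThickLE m) (hcross : D.CrossLE m)
    (hx : x ∈ D.bag a) (hy : y ∈ D.bag b) (hab : a ≠ b) :
    (G.commonNeighbors x y).ncard ≤ 4 * m := by
  obtain ⟨t₁, t₂, hsub⟩ := D.exists_commonNeighbors_subset hx hy hab
  refine (Set.ncard_le_ncard hsub).trans ?_
  have h₁ := Set.ncard_union_le (D.bag t₁ ∪ D.bag t₂ ∪ {w | D.Crosses t₁ s(y, w)})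
    {w | D.Crosses t₂ s(x, w)}
  have h₂ := Set.ncard_union_le (D.bag t₁ ∪ D.bag t₂) {w | D.Crosses t₁ s(y, w)}
  have h₃ := Set.ncard_union_le (D.bag t₁) (D.bag t₂)
  have := hthick t₁
  have := hthick t₂
  have := D.ncard_setOf_crosses_le hcross t₁ y
  have := D.ncard_setOf_crosses_le hcross t₂ x
  omega

noncomputable def single (G : SimpleGraph V) : TreeCutDecomp G where
  β := Unit
  fintypeβ := inferInstance
  T := ⊥
  isTree := .of_subsingleton
  bag _ := Set.univ
  disj s t hst := absurd (Subsingleton.elim s t) hst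
  covers _ := ⟨(), trivial⟩

theorem single_crossNum (G : SimpleGraph V) (t : (single G).β) : (single G).crossNum t = 0 := by
  have hempty : {e | (single G).Crosses t e} = ∅ := Set.eq_empty_of_forall_notMem
    fun _ ⟨_, _, _, _, _, h₁, _⟩ => h₁ (Subsingleton.elim (α := Unit) _ _)
  simp only [crossNum, hempty, Set.ncard_empty]

end TreeCutDecomp

theorem exists_treeCutDecomp_ecrw {V : Type u} [Finite V] (G : SimpleGraph V) :
    ∃ D : TreeCutDecomp G, D.ThickLE (ecrw G) ∧ D.CrossLE (ecrw G) := by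
  have hne : {k | ∃ D : TreeCutDecomp G, D.ThickLE k ∧ D.CrossLE k}.Nonempty :=
    ⟨Nat.card V, TreeCutDecomp.single G, fun _ => Set.ncard_le_card _,
      fun t => (TreeCutDecomp.single_crossNum G t).trans_le (Nat.zero_le _)⟩
  exact Nat.sInf_mem hne

theorem Set.card_le_ncard_of_injective {α ι : Type*} [Finite α] {s : Set α} {f : ι → α}
    (hf : Function.Injective f) (h : ∀ i, f i ∈ s) : Nat.card ι ≤ s.ncard :=
  Set.ncard_range_of_injective hf ▸ Set.ncard_le_ncard (Set.range_subset_iff.mpr h)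

theorem thickenedPath_adj_inl_inr {n : ℕ} {i : Fin n} {a : Fin (n - 1)} {j : Fin n} :
    (thickenedPath n).Adj (Sum.inl i) (Sum.inr (a, j)) ↔
      (i : ℕ) = a ∨ (i : ℕ) = a + 1 := by
  simp [thickenedPath]

theorem TreeCutDecomp.le_four_mul_of_thickenedPath {n m : ℕ}
    (D : TreeCutDecomp (thickenedPath n)) (hthick : D.ThickLE m) (hcross : D.CrossLE m) :
    n ≤ 4 * m := by
  rcases Nat.eq_zero_or_pos n with rfl | hn
  · exact Nat.zero_le _
  by_cases hsame : ∀ (i : ℕ) (hi : i + 1 < n),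
      D.node (Sum.inl ⟨i + 1, hi⟩) = D.node (Sum.inl ⟨i, by omega⟩)
  · have hall : ∀ i : Fin n, D.node (Sum.inl i) = D.node (Sum.inl ⟨0, hn⟩) := by
      rintro ⟨i, hi⟩
      induction i with
      | zero => rfl
      | succ i ih => rw [hsame i hi, ih]
    have hbag := Set.card_le_ncard_of_injective Sum.inl_injective
      fun i : Fin n => hall i ▸ D.mem_bag_node (Sum.inl i)
    rw [Nat.card_fin] at hbag
    have := hthick (D.node (Sum.inl ⟨0, hn⟩))
    omega
  · push Not at hsame
    obtain ⟨i, hi, hne⟩ := hsame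
    have hmid : ∀ j : Fin n, (Sum.inr (⟨i, by omega⟩, j) : Fin n ⊕ (Fin (n - 1) × Fin n)) ∈
        (thickenedPath n).commonNeighbors (Sum.inl ⟨i, by omega⟩) (Sum.inl ⟨i + 1, hi⟩) := by
      simp [mem_commonNeighbors, thickenedPath_adj_inl_inr]
    have hcommon := Set.card_le_ncard_of_injective
      (fun _ _ h => (Prod.ext_iff.mp (Sum.inr_injective h)).2) hmid
    rw [Nat.card_fin] at hcommon
    exact hcommon.trans (D.ncard_commonNeighbors_le hthick hcross (D.mem_bag_node _)
      (D.mem_bag_node _) hne.symm)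

theorem stmt_6_general (k : ℕ) : k ≤ ecrw (thickenedPath (4 * k)) := by
  obtain ⟨D, hthick, hcross⟩ := exists_treeCutDecomp_ecrw (thickenedPath (4 * k))
  have := D.le_four_mul_of_thickenedPath hthick hcross
  omega

/-- For every positive integer `k`, the thickened `4k`-path has edge-crossing width
at least `k`. -/
theorem stmt_6 (k : ℕ) (hk : 0 < k) : k ≤ ecrw (thickenedPath (4 * k)) :=
  stmt_6_general k
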